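/- Assume μ(Q⁰) > 0. Then μ(H_q(0)) > 0 and for every integer κ ≥ 1, π(κ) = μ(H_q(κ))/μ(H_q(0)); that is, the finite-time cluster size distribution π(κ) = (μ(Q^{κ−1}) − μ(Q^κ))/μ(Q⁰) equals the conditional probability of H_q(κ) given H_q(0). -/
import Mathlib


open Set MeasureTheory

/-- `U⁰ = B` and `U^{κ+1} = U^κ \ (U^κ ∩ ⋂_{i=1}^q T^{−i}((U^κ)ᶜ))`. -/
def Uset {Ω : Type*} (T : Ω → Ω) (B : Set Ω) (q : ℕ) : ℕ → Set Ω
  | 0 => B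
  | κ + 1 =>
      Uset T B q κ \
        (Uset T B q κ ∩ ⋂ i ∈ Finset.Icc 1 q, T^[i] ⁻¹' (Uset T B q κ)ᶜ)

/-- `Q^κ = U^κ ∩ ⋂_{i=1}^q T^{−i}((U^κ)ᶜ)`. -/
def Qset {Ω : Type*} (T : Ω → Ω) (B : Set Ω) (q : ℕ) (κ : ℕ) : Set Ω :=
  Uset T B q κ ∩ ⋂ i ∈ Finset.Icc 1 q, T^[i] ⁻¹' (Uset T B q κ)ᶜ

/-- `U^∞ = ⋂_{κ ≥ 0} U^κ`. -/
def Uinf {Ω : Type*} (T : Ω → Ω) (B : Set Ω) (q : ℕ) : Set Ω :=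
  ⋂ κ, Uset T B q κ

/-- `W_m = ⋂_{i=0}^{m-1} T^{−i}(Bᶜ)`. -/
def Wset {Ω : Type*} (T : Ω → Ω) (B : Set Ω) (m : ℕ) : Set Ω :=
  ⋂ i ∈ Finset.range m, T^[i] ⁻¹' Bᶜ

/-- `H_q(0) = W_q \ W_{q+1}` and, for `κ ≥ 1`,
`H_q(κ) = T^{−q}(Q^{κ−1}) \ ⋃_{i=0}^{q−1} T^{−i}(Q^κ)`. -/
def Hset {Ω : Type*} (T : Ω → Ω) (B : Set Ω) (q : ℕ) : ℕ → Set Ω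
  | 0 => Wset T B q \ Wset T B (q + 1)
  | κ + 1 =>
      T^[q] ⁻¹' Qset T B q κ \ ⋃ i ∈ Finset.range q, T^[i] ⁻¹' Qset T B q (κ + 1)

section Aux

variable {Ω : Type*} (T : Ω → Ω) (B : Set Ω) (q : ℕ)

lemma Uset_succ (κ : ℕ) : Uset T B q (κ + 1) = Uset T B q κ \ Qset T B q κ := rfl

lemma Qset_subset (κ : ℕ) : Qset T B q κ ⊆ Uset T B q κ := Set.inter_subset_left

lemma mem_Qset_iff {x : Ω} {κ : ℕ} :
    x ∈ Qset T B q κ ↔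
      x ∈ Uset T B q κ ∧ ∀ i, 1 ≤ i → i ≤ q → T^[i] x ∉ Uset T B q κ := by
  simp [Qset, Finset.mem_Icc, and_imp]

lemma Qset_noreturn {x : Ω} {κ j : ℕ} (hx : x ∈ Qset T B q κ)
    (h1 : 1 ≤ j) (h2 : j ≤ q) : T^[j] x ∉ Uset T B q κ :=
  ((mem_Qset_iff T B q).1 hx).2 j h1 h2

lemma disj_pre {κ i j : ℕ} (hij : i < j) (hjq : j ≤ i + q) :
    Disjoint (T^[i] ⁻¹' Qset T B q κ) (T^[j] ⁻¹' Qset T B q κ) := by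
  rw [Set.disjoint_left]
  intro x hxi hxj
  rw [Set.mem_preimage] at hxi hxj
  have h1 : T^[j] x = T^[j - i] (T^[i] x) := by
    rw [← Function.iterate_add_apply]
    congr 1
    omega
  rw [h1] at hxj
  exact Qset_noreturn T B q hxi (show 1 ≤ j - i by omega) (show j - i ≤ q by omega)
    (Qset_subset T B q κ hxj)

lemma Qset_cover {κ : ℕ} {x : Ω} (hx : x ∈ Qset T B q (κ + 1)) :
    ∃ j, 1 ≤ j ∧ j ≤ q ∧ T^[j] x ∈ Qset T B q κ := by
  have hxU : x ∈ Uset T B q κ \ Qset T B q κ := Qset_subset T B q (κ + 1) hx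
  obtain ⟨hxU', hxQ⟩ := hxU
  have hex : ¬ ∀ j, 1 ≤ j → j ≤ q → T^[j] x ∉ Uset T B q κ := fun h =>
    hxQ ((mem_Qset_iff T B q).2 ⟨hxU', h⟩)
  push_neg at hex
  obtain ⟨j, h1, h2, h3⟩ := hex
  refine ⟨j, h1, h2, ?_⟩
  have h4 : T^[j] x ∉ Uset T B q (κ + 1) := Qset_noreturn T B q hx h1 h2
  rw [Uset_succ] at h4
  by_contra h5
  exact h4 ⟨h3, h5⟩

variable [MeasurableSpace Ω]

lemma Uset_meas (hT : Measurable T) (hB : MeasurableSet B) :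
    ∀ κ, MeasurableSet (Uset T B q κ)
  | 0 => hB
  | κ + 1 => by
    have h := Uset_meas hT hB κ
    exact h.diff (h.inter (Finset.measurableSet_biInter _ fun i _ =>
      (hT.iterate i) h.compl))

lemma Qset_meas (hT : Measurable T) (hB : MeasurableSet B) (κ : ℕ) :
    MeasurableSet (Qset T B q κ) :=
  (Uset_meas T B q hT hB κ).inter (Finset.measurableSet_biInter _ fun i _ =>
    (hT.iterate i) (Uset_meas T B q hT hB κ).compl)

lemma Wset_meas (hT : Measurable T) (hB : MeasurableSet B) (m : ℕ) :
    MeasurableSet (Wset T B m) :=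
  Finset.measurableSet_biInter _ fun i _ => (hT.iterate i) hB.compl

lemma pres_iter (μ : Measure Ω) (hT : Measurable T)
    (hpres : ∀ E : Set Ω, MeasurableSet E → μ (T ⁻¹' E) = μ E)
    {E : Set Ω} (hE : MeasurableSet E) : ∀ i, μ (T^[i] ⁻¹' E) = μ E
  | 0 => by simp
  | i + 1 => by
    rw [Function.iterate_succ, Set.preimage_comp,
      hpres _ ((hT.iterate i) hE), pres_iter μ hT hpres hE i]

end Aux

theorem pi_eq_conditional_prob {Ω : Type*} [MeasurableSpace Ω] (μ : Measure Ω)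
    [IsProbabilityMeasure μ] (T : Ω → Ω) (hT : Measurable T) (B : Set Ω)
    (hB : MeasurableSet B)
    (hpres : ∀ E : Set Ω, MeasurableSet E → μ (T ⁻¹' E) = μ E)
    (q : ℕ) (hq : 1 ≤ q) (hQ0 : 0 < μ (Qset T B q 0)) :
    0 < μ (Hset T B q 0) ∧
    ∀ κ : ℕ, 1 ≤ κ →
      ((μ (Qset T B q (κ - 1))).toReal - (μ (Qset T B q κ)).toReal)
          / (μ (Qset T B q 0)).toReal
        = (μ (Hset T B q κ)).toReal / (μ (Hset T B q 0)).toReal := by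
  have hQm : ∀ κ, MeasurableSet (Qset T B q κ) := Qset_meas T B q hT hB
  have hWm : ∀ m, MeasurableSet (Wset T B m) := Wset_meas T B hT hB
  have hiter : ∀ {E : Set Ω}, MeasurableSet E → ∀ i, μ (T^[i] ⁻¹' E) = μ E :=
    fun hE => pres_iter T μ hT hpres hE
  -- iterate successor identity
  have hit : ∀ (i : ℕ) (x : Ω), T^[i] (T x) = T^[i + 1] x := fun i x =>
    (Function.iterate_succ_apply T i x).symm
  -- Step 0: μ (Hset 0) = μ (Qset 0)
  have hW1 : T ⁻¹' Wset T B q ∩ B = Qset T B q 0 := by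
    ext x
    simp only [Qset, Wset, Set.mem_inter_iff, Set.mem_preimage, Set.mem_iInter,
      Finset.mem_range, Finset.mem_Icc, Set.mem_compl_iff, and_imp]
    constructor
    · rintro ⟨h1, h2⟩
      refine ⟨h2, fun i hi1 hi2 => ?_⟩
      have := h1 (i - 1) (by omega)
      rw [hit] at this
      have hh : i - 1 + 1 = i := by omega
      rwa [hh] at this
    · rintro ⟨h2, h1⟩
      refine ⟨fun i hi => ?_, h2⟩
      rw [hit]
      exact h1 (i + 1) (by omega) (by omega)
  have hW2 : T ⁻¹' Wset T B q \ B = Wset T B (q + 1) := by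
    ext x
    simp only [Wset, Set.mem_diff, Set.mem_preimage, Set.mem_iInter,
      Finset.mem_range, Set.mem_compl_iff]
    constructor
    · rintro ⟨h1, h2⟩ i hi
      rcases Nat.eq_zero_or_pos i with h | h
      · simpa [h] using h2
      · have := h1 (i - 1) (by omega)
        rw [hit] at this
        have hh : i - 1 + 1 = i := by omega
        rwa [hh] at this
    · intro h
      refine ⟨fun i hi => ?_, by simpa using h 0 (by omega)⟩
      rw [hit]
      exact h (i + 1) (by omega)
  have hWsub : Wset T B (q + 1) ⊆ Wset T B q := by
    intro x hx
    simp only [Wset, Set.mem_iInter, Finset.mem_range] at hx ⊢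
    exact fun i hi => hx i (by omega)
  have hkey0 : μ (Qset T B q 0) + μ (Wset T B (q + 1)) = μ (Wset T B q) := by
    have := measure_inter_add_diff (μ := μ) (T ⁻¹' Wset T B q) hB
    rw [hW1, hW2, hpres _ (hWm q)] at this
    exact this
  have hkeyH : μ (Wset T B (q + 1)) + μ (Hset T B q 0) = μ (Wset T B q) := by
    have := measure_inter_add_diff (μ := μ) (Wset T B q) (hWm (q + 1))
    rw [Set.inter_eq_self_of_subset_right hWsub] at this
    exact this
  have hH0 : μ (Hset T B q 0) = μ (Qset T B q 0) := by
    have h1 : μ (Wset T B (q + 1)) + μ (Hset T B q 0)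
        = μ (Wset T B (q + 1)) + μ (Qset T B q 0) := by
      rw [hkeyH, ← hkey0, add_comm]
    exact (ENNReal.add_right_inj (measure_ne_top μ _)).1 h1
  have hcomp : ∀ (a b : ℕ) (x : Ω), T^[a] (T^[b] x) = T^[a + b] x := fun a b x =>
    (Function.iterate_add_apply T a b x).symm
  -- Step κ ≥ 1 : μ (Qset κ) = μ (Qset (κ+1)) + μ (Hset (κ+1))
  have hstep : ∀ κ : ℕ,
      μ (Qset T B q κ) = μ (Qset T B q (κ + 1)) + μ (Hset T B q (κ + 1)) := by
    intro κ
    have hsum1 : μ (Qset T B q (κ + 1))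
        = ∑ j ∈ Finset.Icc 1 q, μ (Qset T B q (κ + 1) ∩ T^[j] ⁻¹' Qset T B q κ) := by
      have hcov : Qset T B q (κ + 1)
          = ⋃ j ∈ Finset.Icc 1 q, (Qset T B q (κ + 1) ∩ T^[j] ⁻¹' Qset T B q κ) := by
        ext x
        simp only [Set.mem_iUnion, Finset.mem_Icc, Set.mem_inter_iff,
          Set.mem_preimage]
        constructor
        · intro hx
          obtain ⟨j, h1, h2, h3⟩ := Qset_cover T B q hx
          exact ⟨j, ⟨h1, h2⟩, hx, h3⟩
        · rintro ⟨j, _, hx, _⟩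
          exact hx
      have hpd : (↑(Finset.Icc 1 q) : Set ℕ).PairwiseDisjoint
          (fun j => Qset T B q (κ + 1) ∩ T^[j] ⁻¹' Qset T B q κ) := by
        intro a ha b hb hab
        simp only [Finset.coe_Icc, Set.mem_Icc] at ha hb
        have hd : ∀ i j : ℕ, i < j → j ≤ i + q →
            Disjoint (Qset T B q (κ + 1) ∩ T^[i] ⁻¹' Qset T B q κ)
              (Qset T B q (κ + 1) ∩ T^[j] ⁻¹' Qset T B q κ) := fun i j h1 h2 =>
          ((disj_pre T B q h1 h2).mono Set.inter_subset_right Set.inter_subset_right)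
        rcases lt_or_gt_of_ne hab with h | h
        · exact hd a b h (by omega)
        · exact (hd b a h (by omega)).symm
      conv_lhs => rw [hcov]
      exact measure_biUnion_finset hpd
        (fun j _ => (hQm _).inter ((hT.iterate j) (hQm κ)))
    have hsum2 : μ (T^[q] ⁻¹' Qset T B q κ ∩ ⋃ i ∈ Finset.range q,
          T^[i] ⁻¹' Qset T B q (κ + 1))
        = ∑ j ∈ Finset.Icc 1 q, μ (Qset T B q (κ + 1) ∩ T^[j] ⁻¹' Qset T B q κ) := by
      have hre : T^[q] ⁻¹' Qset T B q κ ∩ ⋃ i ∈ Finset.range q,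
            T^[i] ⁻¹' Qset T B q (κ + 1)
          = ⋃ j ∈ Finset.Icc 1 q,
              T^[q - j] ⁻¹' (Qset T B q (κ + 1) ∩ T^[j] ⁻¹' Qset T B q κ) := by
        ext x
        simp only [Set.mem_inter_iff, Set.mem_iUnion, Set.mem_preimage,
          Finset.mem_range, Finset.mem_Icc]
        constructor
        · rintro ⟨hA, i, hi, hx⟩
          refine ⟨q - i, ⟨by omega, by omega⟩, ?_, ?_⟩
          · have hh : q - (q - i) = i := by omega
            rw [hh]
            exact hx
          · have hh : q - (q - i) = i := by omega
            rw [hh, hcomp]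
            have hh2 : q - i + i = q := by omega
            rw [hh2]
            exact hA
        · rintro ⟨j, ⟨h1, h2⟩, hx1, hx2⟩
          rw [hcomp] at hx2
          have hh : j + (q - j) = q := by omega
          rw [hh] at hx2
          exact ⟨hx2, q - j, by omega, hx1⟩
      have hpd2 : (↑(Finset.Icc 1 q) : Set ℕ).PairwiseDisjoint
          (fun j => T^[q - j] ⁻¹' (Qset T B q (κ + 1) ∩ T^[j] ⁻¹' Qset T B q κ)) := by
        intro a ha b hb hab
        simp only [Finset.coe_Icc, Set.mem_Icc] at ha hb
        have hd : ∀ i j : ℕ, 1 ≤ i → i ≤ q → 1 ≤ j → j ≤ q → q - i < q - j →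
            Disjoint (T^[q - i] ⁻¹' (Qset T B q (κ + 1) ∩ T^[i] ⁻¹' Qset T B q κ))
              (T^[q - j] ⁻¹' (Qset T B q (κ + 1) ∩ T^[j] ⁻¹' Qset T B q κ)) := by
          intro i j hi1 hi2 hj1 hj2 hlt
          refine (disj_pre T B q (κ := κ + 1) hlt (by omega)).mono ?_ ?_
          · exact Set.preimage_mono Set.inter_subset_left
          · exact Set.preimage_mono Set.inter_subset_left
        have hne : q - a ≠ q - b := by omega
        rcases lt_or_gt_of_ne hne with h | h
        · exact hd a b ha.1 ha.2 hb.1 hb.2 h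
        · exact (hd b a hb.1 hb.2 ha.1 ha.2 h).symm
      rw [hre, measure_biUnion_finset hpd2 (fun j _ => (hT.iterate (q - j))
        ((hQm _).inter ((hT.iterate j) (hQm κ))))]
      exact Finset.sum_congr rfl fun j _ =>
        hiter ((hQm _).inter ((hT.iterate j) (hQm κ))) (q - j)
    have hSm : MeasurableSet (⋃ i ∈ Finset.range q, T^[i] ⁻¹' Qset T B q (κ + 1)) :=
      Finset.measurableSet_biUnion _ fun i _ => (hT.iterate i) (hQm (κ + 1))
    have h5 := measure_inter_add_diff (μ := μ) (T^[q] ⁻¹' Qset T B q κ) hSm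
    rw [hsum2, ← hsum1, hiter (hQm κ) q] at h5
    rw [← h5]
    rfl
  -- conclusion
  constructor
  · rw [hH0]
    exact hQ0
  · intro κ hκ
    obtain ⟨κ', rfl⟩ : ∃ κ', κ = κ' + 1 := ⟨κ - 1, by omega⟩
    simp only [Nat.add_sub_cancel]
    rw [hH0]
    have ha : (μ (Qset T B q κ')).toReal
        = (μ (Qset T B q (κ' + 1))).toReal + (μ (Hset T B q (κ' + 1))).toReal := by
      rw [hstep κ', ENNReal.toReal_add (measure_ne_top μ _) (measure_ne_top μ _)]
    rw [ha, add_sub_cancel_left]
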